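/- There exist ε > 0 and R₀ > 1/ε¹⁰ such that for all R > R₀: for every w ∈ K⁺ and every n ≥ 1, Mₙ ≤ max{((3/2)·Mₙ₋₁)^{3/2}, (1/ε)|yₙ|^{3/2}}. -/

import Mathlib

open Complex Filter Topology

/-- The quadratic automorphism `H(x,y,z) = (xy + az, x² + by, x)` of `ℂ³`. -/
noncomputable def H (a b : ℂ) (w : ℂ × ℂ × ℂ) : ℂ × ℂ × ℂ :=
  (w.1 * w.2.1 + a * w.2.2, w.1 ^ 2 + b * w.2.1, w.1)

/-- `V⁻ = {(x,y,z) : |xy| > max{R, 2|az|, |x|^{3/2}, (1/ε)|y|^{3/2}}}`. -/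
noncomputable def Vminus (a : ℂ) (ε R : ℝ) : Set (ℂ × ℂ × ℂ) :=
  {w | ‖w.1 * w.2.1‖ >
    max R (max (2 * ‖a * w.2.2‖)
      (max (‖w.1‖ ^ ((3 : ℝ) / 2))
        ((1 / ε) * ‖w.2.1‖ ^ ((3 : ℝ) / 2))))}

/-- `U⁺ = ⋃_{n≥0} H⁻ⁿ(V⁻)`, i.e. the points whose forward orbit meets `V⁻`. -/
noncomputable def Uplus (a b : ℂ) (ε R : ℝ) : Set (ℂ × ℂ × ℂ) :=
  ⋃ n : ℕ, (H a b)^[n] ⁻¹' Vminus a ε R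

/-- `K⁺ = ℂ³ \ U⁺`. -/
noncomputable def Kplus (a b : ℂ) (ε R : ℝ) : Set (ℂ × ℂ × ℂ) :=
  (Uplus a b ε R)ᶜ

/-- `Mₙ = max{R, 2|azₙ|, |xₙ|^{3/2}, (1/ε)|yₙ|^{3/2}}` where `Hⁿ(w) = (xₙ,yₙ,zₙ)`. -/
noncomputable def Mseq (a b : ℂ) (ε R : ℝ) (w : ℂ × ℂ × ℂ) (n : ℕ) : ℝ :=
  max R (max (2 * ‖a * ((H a b)^[n] w).2.2‖)
    (max (‖((H a b)^[n] w).1‖ ^ ((3 : ℝ) / 2))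
      ((1 / ε) * ‖((H a b)^[n] w).2.1‖ ^ ((3 : ℝ) / 2))))

/-!
Let `(x, y, z) = Hⁿ(w)`, `M = Mₙ`, and take `ε = 1`, `R₀ = 2 + 4|a|²`. Membership in `K⁺` gives
`|xy| ≤ M`, and the definition of `M` gives `|az| ≤ M/2`, so `|xₙ₊₁| = |xy + az| ≤ (3/2) M`.
Since `M ≥ R ≥ 1`, `|x|^{3/2} ≤ M` forces `|x| ≤ M`, and `M ≥ R ≥ 4|a|²` gives `2|a| ≤ √M`;
hence `2|a zₙ₊₁| = 2|a x| ≤ M^{3/2}`. Finally `R ≤ M ≤ M^{3/2}`.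
-/

open Real

lemma le_of_rpow_le_of_one_le {t p M : ℝ} (hp : 1 ≤ p) (hM : 1 ≤ M) (h : t ^ p ≤ M) :
    t ≤ M := by
  rcases le_or_gt t 1 with ht | ht
  · linarith
  · exact (self_le_rpow_of_one_le ht.le hp).trans h

lemma mul_le_rpow_three_halves {c t M : ℝ} (hc : 0 ≤ c) (ht : 0 ≤ t) (hcM : c ^ 2 ≤ M)
    (htM : t ≤ M) : c * t ≤ M ^ ((3 : ℝ) / 2) := by
  have hM : 0 ≤ M := (sq_nonneg c).trans hcM
  have hc_sqrt : c ≤ √M := (le_sqrt hc hM).2 hcM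
  calc c * t ≤ √M * M := mul_le_mul hc_sqrt htM ht (sqrt_nonneg M)
    _ = M ^ ((3 : ℝ) / 2) := by
      rw [sqrt_eq_rpow, show (3 : ℝ) / 2 = 1 / 2 + 1 by norm_num,
        rpow_add' hM (by norm_num), rpow_one]

lemma norm_mul_le_Mseq_of_mem_Kplus {a b : ℂ} {ε R : ℝ} {w : ℂ × ℂ × ℂ}
    (hw : w ∈ Kplus a b ε R) (n : ℕ) :
    ‖((H a b)^[n] w).1 * ((H a b)^[n] w).2.1‖ ≤ Mseq a b ε R w n :=
  not_lt.1 fun hV => hw (Set.mem_iUnion.2 ⟨n, hV⟩)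

lemma Mseq_succ_le {a b : ℂ} {ε R : ℝ} {w : ℂ × ℂ × ℂ} {n : ℕ} (hR : 1 ≤ R)
    (haR : 4 * ‖a‖ ^ 2 ≤ R)
    (hK : ‖((H a b)^[n] w).1 * ((H a b)^[n] w).2.1‖ ≤ Mseq a b ε R w n) :
    Mseq a b ε R w (n + 1) ≤
      max ((3 / 2 * Mseq a b ε R w n) ^ ((3 : ℝ) / 2))
        ((1 / ε) * ‖((H a b)^[n + 1] w).2.1‖ ^ ((3 : ℝ) / 2)) := by
  set p := (H a b)^[n] w with hp
  set M := Mseq a b ε R w n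
  have hRM : R ≤ M := le_max_left _ _
  have haz : 2 * ‖a * p.2.2‖ ≤ M := (le_max_left _ _).trans (le_max_right _ _)
  have hx : ‖p.1‖ ^ ((3 : ℝ) / 2) ≤ M :=
    ((le_max_left _ _).trans (le_max_right _ _)).trans (le_max_right _ _)
  have hM_le : M ^ ((3 : ℝ) / 2) ≤ (3 / 2 * M) ^ ((3 : ℝ) / 2) :=
    rpow_le_rpow (by linarith) (by linarith) (by norm_num)
  have hnext : (H a b)^[n + 1] w = (p.1 * p.2.1 + a * p.2.2, p.1 ^ 2 + b * p.2.1, p.1) := by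
    rw [Function.iterate_succ_apply', ← hp]; rfl
  have hMseq_succ : Mseq a b ε R w (n + 1) = max R (max (2 * ‖a * p.1‖)
      (max (‖p.1 * p.2.1 + a * p.2.2‖ ^ ((3 : ℝ) / 2))
        ((1 / ε) * ‖((H a b)^[n + 1] w).2.1‖ ^ ((3 : ℝ) / 2)))) := by
    rw [Mseq, hnext]
  rw [hMseq_succ]
  refine max_le ?_ (max_le ?_ (max_le ?_ (le_max_right _ _)))
  · have := self_le_rpow_of_one_le (hR.trans hRM) (by norm_num : (1 : ℝ) ≤ 3 / 2)
    exact le_max_of_le_left (by linarith)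
  · have hx_le : ‖p.1‖ ≤ M := le_of_rpow_le_of_one_le (by norm_num) (hR.trans hRM) hx
    have h2a : (2 * ‖a‖) ^ 2 ≤ M := by linarith
    have := mul_le_rpow_three_halves (by positivity) (norm_nonneg _) h2a hx_le
    rw [norm_mul, ← mul_assoc]
    exact le_max_of_le_left (this.trans hM_le)
  · have hsum : ‖p.1 * p.2.1 + a * p.2.2‖ ≤ 3 / 2 * M := by
      linarith [norm_add_le (p.1 * p.2.1) (a * p.2.2)]
    exact le_max_of_le_left (rpow_le_rpow (norm_nonneg _) hsum (by norm_num))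

theorem stmt11_general (a b : ℂ) :
    ∃ ε > (0 : ℝ), ∃ R₀ > 1 / ε ^ 10, ∀ R > R₀, ∀ w ∈ Kplus a b ε R,
      ∀ n : ℕ, Mseq a b ε R w (n + 1) ≤
        max ((3 / 2 * Mseq a b ε R w n) ^ ((3 : ℝ) / 2))
          ((1 / ε) * ‖((H a b)^[n + 1] w).2.1‖ ^ ((3 : ℝ) / 2)) := by
  have h4a : 0 ≤ 4 * ‖a‖ ^ 2 := by positivity
  refine ⟨1, one_pos, 2 + 4 * ‖a‖ ^ 2, by norm_num; linarith, fun R hR w hw n => ?_⟩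
  exact Mseq_succ_le (by linarith) (by linarith) (norm_mul_le_Mseq_of_mem_Kplus hw n)

/-- there exist `ε > 0` and `R₀ > 1/ε¹⁰` such that for all
`R > R₀`: for every `w ∈ K⁺` and every `n ≥ 1`,
`Mₙ ≤ max{((3/2)·Mₙ₋₁)^{3/2}, (1/ε)|yₙ|^{3/2}}`. -/
theorem stmt11 (a b : ℂ) (ha : a ≠ 0) (hb : b ≠ 0) :
    ∃ ε > (0 : ℝ), ∃ R₀ > 1 / ε ^ 10, ∀ R > R₀, ∀ w ∈ Kplus a b ε R,
      ∀ n : ℕ, Mseq a b ε R w (n + 1) ≤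
        max ((3 / 2 * Mseq a b ε R w n) ^ ((3 : ℝ) / 2))
          ((1 / ε) * ‖((H a b)^[n + 1] w).2.1‖ ^ ((3 : ℝ) / 2)) :=
  stmt11_general a b
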